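/- For every integer $D \geq 4$, the improper integral $\int_0^1 \frac{1 - 2 z^{D-1} + z^{D+1}}{(1-z^2)^{3/2}}\,dz$ converges and equals $\sqrt{\pi}\,\frac{D-2}{2}\cdot\frac{\Gamma(D/2)}{\Gamma((D+1)/2)}$. -/

import Mathlib

/-!
With `n = D - 1` the numerator is `(1 - zⁿ) - zⁿ (1 - z²)`. The function
`(z - zⁿ⁺¹) / √(1 - z²)` tends to `0` at both ends of `(0, 1)` and has derivative
`(1 - zⁿ) / (1 - z²)^(3/2) - n zⁿ / √(1 - z²)`, so the integral equals
`(n - 1) ∫₀¹ zⁿ / √(1 - z²)`. The substitution `t = z²` turns the latter into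
`B((n + 1) / 2, 1 / 2) / 2`. Integrability comes from `1 - zⁿ ≤ n (1 - z²)` on `[0, 1]`,
which bounds everything by a multiple of the arcsine density `1 / √(1 - z²)`.
-/

open Real MeasureTheory Set Filter Topology

lemma rpow_three_halves_eq_mul_sqrt {x : ℝ} (hx : 0 ≤ x) : x ^ (3 / 2 : ℝ) = x * √x := by
  rw [show (3 / 2 : ℝ) = 1 + 1 / 2 by norm_num, rpow_add' hx (by norm_num), rpow_one,
    sqrt_eq_rpow]

lemma integral_rpow_mul_one_sub_rpow {a b : ℝ} (ha : 0 < a) (hb : 0 < b) :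
    ∫ t in (0 : ℝ)..1, t ^ (a - 1) * (1 - t) ^ (b - 1) = Gamma a * Gamma b / Gamma (a + b) := by
  have hB : Complex.betaIntegral a b = ↑(∫ t in (0 : ℝ)..1, t ^ (a - 1) * (1 - t) ^ (b - 1)) := by
    rw [Complex.betaIntegral, ← intervalIntegral.integral_ofReal]
    refine intervalIntegral.integral_congr fun t ht => ?_
    rw [uIcc_of_le zero_le_one] at ht
    push_cast
    rw [Complex.ofReal_cpow ht.1, Complex.ofReal_cpow (sub_nonneg.2 ht.2)]
    push_cast
    ring_nf
  have hGamma := Complex.betaIntegral_eq_Gamma_mul_div a b (by simpa) (by simpa)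
  rw [hB, ← Complex.ofReal_add, Complex.Gamma_ofReal, Complex.Gamma_ofReal,
    Complex.Gamma_ofReal] at hGamma
  exact_mod_cast hGamma

lemma integral_rpow_mul_one_sub_sq_rpow {a b : ℝ} (ha : 0 < a) (hb : 0 < b) :
    ∫ z in Ioo (0 : ℝ) 1, z ^ (2 * a - 1) * (1 - z ^ 2) ^ (b - 1) =
      Gamma a * Gamma b / Gamma (a + b) / 2 := by
  have hmono : StrictMonoOn (fun z : ℝ => z ^ 2) (Icc 0 1) :=
    (pow_left_strictMonoOn₀ two_ne_zero).mono fun z hz => hz.1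
  have himage : (fun z : ℝ => z ^ 2) '' Ioo 0 1 = Ioo 0 1 := by
    simpa using (continuous_pow 2).continuousOn.image_Ioo_of_strictMonoOn zero_le_one hmono
  have hsubst := integral_image_eq_integral_abs_deriv_smul measurableSet_Ioo
    (f' := fun z => 2 * z) (fun z _ => by simpa using (hasDerivAt_pow 2 z).hasDerivWithinAt)
    (hmono.injOn.mono Ioo_subset_Icc_self) (fun t => t ^ (a - 1) * (1 - t) ^ (b - 1))
  rw [himage, ← integral_Ioc_eq_integral_Ioo, ← intervalIntegral.integral_of_le zero_le_one,
    integral_rpow_mul_one_sub_rpow ha hb] at hsubst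
  rw [hsubst, ← integral_div]
  refine setIntegral_congr_fun measurableSet_Ioo fun z hz => ?_
  have hpow : (z ^ 2) ^ (a - 1) * z = z ^ (2 * a - 1) := by
    rw [← rpow_natCast, ← rpow_mul hz.1.le, ← rpow_add_one hz.1.ne']
    push_cast
    ring_nf
  rw [smul_eq_mul, abs_of_pos (by linarith [hz.1]), ← hpow]
  ring

lemma one_sub_pow_le_mul_one_sub_sq {z : ℝ} (hz : z ∈ Icc (0 : ℝ) 1) (n : ℕ) :
    1 - z ^ n ≤ n * (1 - z ^ 2) := by
  have bernoulli := one_add_mul_le_pow (a := z - 1) (by linarith [hz.1]) n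
  rw [add_sub_cancel] at bernoulli
  have hsq : 1 - z ≤ 1 - z ^ 2 := by nlinarith [hz.1, hz.2]
  nlinarith [mul_le_mul_of_nonneg_left hsq (Nat.cast_nonneg (α := ℝ) n)]

lemma integrableOn_inv_sqrt_one_sub_sq :
    IntegrableOn (fun z : ℝ => (√(1 - z ^ 2))⁻¹) (Ioo 0 1) := by
  simpa only [sqrt_inv] using
    Polynomial.Chebyshev.intervalIntegrable_sqrt_one_sub_sq_inv.1.mono_set
      (Ioo_subset_Ioc_self.trans (Ioc_subset_Ioc_left (by norm_num)))

section

variable (n : ℕ)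

lemma integrableOn_pow_div_sqrt_one_sub_sq :
    IntegrableOn (fun z : ℝ => z ^ n / √(1 - z ^ 2)) (Ioo 0 1) := by
  refine integrableOn_inv_sqrt_one_sub_sq.mono' (by fun_prop : Measurable _).aestronglyMeasurable
    (ae_restrict_of_forall_mem measurableSet_Ioo fun z hz => ?_)
  rw [norm_of_nonneg (by have := hz.1; positivity), div_eq_mul_inv]
  exact mul_le_of_le_one_left (by positivity) (pow_le_one₀ hz.1.le hz.2.le)

lemma integrableOn_one_sub_pow_div_rpow_three_halves :
    IntegrableOn (fun z : ℝ => (1 - z ^ n) / (1 - z ^ 2) ^ (3 / 2 : ℝ)) (Ioo 0 1) := by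
  refine (integrableOn_inv_sqrt_one_sub_sq.const_mul n).mono'
    (by fun_prop : Measurable _).aestronglyMeasurable
    (ae_restrict_of_forall_mem measurableSet_Ioo fun z hz => ?_)
  have hu : 0 < 1 - z ^ 2 := by nlinarith [hz.1, hz.2]
  have hz' : z ∈ Icc (0 : ℝ) 1 := Ioo_subset_Icc_self hz
  rw [norm_of_nonneg (div_nonneg (sub_nonneg.2 (pow_le_one₀ hz'.1 hz'.2)) (by positivity)),
    rpow_three_halves_eq_mul_sqrt hu.le]
  calc (1 - z ^ n) / ((1 - z ^ 2) * √(1 - z ^ 2))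
      ≤ n * (1 - z ^ 2) / ((1 - z ^ 2) * √(1 - z ^ 2)) := by
        gcongr
        exact one_sub_pow_le_mul_one_sub_sq hz' n
    _ = n * (√(1 - z ^ 2))⁻¹ := by field_simp

lemma hasDerivAt_sub_pow_div_sqrt_one_sub_sq {z : ℝ} (hz : z ^ 2 < 1) :
    HasDerivAt (fun z : ℝ => (z - z ^ (n + 1)) / √(1 - z ^ 2))
      ((1 - z ^ n) / (1 - z ^ 2) ^ (3 / 2 : ℝ) - n * (z ^ n / √(1 - z ^ 2))) z := by
  have hu : 0 < 1 - z ^ 2 := by linarith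
  have hs : 0 < √(1 - z ^ 2) := sqrt_pos.2 hu
  have hnum : HasDerivAt (fun z : ℝ => z - z ^ (n + 1)) (1 - (n + 1) * z ^ n) z := by
    simpa using (hasDerivAt_id' z).fun_sub (hasDerivAt_pow (n + 1) z)
  have hden : HasDerivAt (fun z : ℝ => √(1 - z ^ 2)) (-(2 * z) / (2 * √(1 - z ^ 2))) z := by
    simpa using ((hasDerivAt_const z 1).sub (hasDerivAt_pow 2 z)).sqrt hu.ne'
  refine (hnum.div hden hs.ne').congr_deriv ?_
  rw [rpow_three_halves_eq_mul_sqrt hu.le]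
  field_simp
  rw [sq_sqrt hu.le]
  ring

lemma tendsto_sub_pow_div_sqrt_one_sub_sq_nhdsGT_zero :
    Tendsto (fun z : ℝ => (z - z ^ (n + 1)) / √(1 - z ^ 2)) (𝓝[>] 0) (𝓝 0) := by
  have hcont : ContinuousAt (fun z : ℝ => (z - z ^ (n + 1)) / √(1 - z ^ 2)) 0 :=
    ContinuousAt.div (by fun_prop) (by fun_prop) (by simp)
  simpa using hcont.tendsto.mono_left nhdsWithin_le_nhds

lemma tendsto_sub_pow_div_sqrt_one_sub_sq_nhdsLT_one :
    Tendsto (fun z : ℝ => (z - z ^ (n + 1)) / √(1 - z ^ 2)) (𝓝[<] 1) (𝓝 0) := by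
  have hbound : Tendsto (fun z : ℝ => n * √(1 - z ^ 2)) (𝓝[<] 1) (𝓝 0) := by
    have hcont : Continuous fun z : ℝ => n * √(1 - z ^ 2) := by fun_prop
    simpa using (hcont.tendsto 1).mono_left nhdsWithin_le_nhds
  refine tendsto_of_tendsto_of_tendsto_of_le_of_le' tendsto_const_nhds hbound ?_ ?_ <;>
    filter_upwards [Ioo_mem_nhdsLT (zero_lt_one' ℝ)] with z hz
  · have := pow_le_of_le_one hz.1.le hz.2.le n.succ_ne_zero
    exact div_nonneg (sub_nonneg.2 this) (sqrt_nonneg _)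
  · have hu : 0 < 1 - z ^ 2 := by nlinarith [hz.1, hz.2]
    have hpow : z ^ n ≤ 1 := pow_le_one₀ hz.1.le hz.2.le
    rw [div_le_iff₀ (sqrt_pos.2 hu), mul_assoc, mul_self_sqrt hu.le]
    calc z - z ^ (n + 1) = z * (1 - z ^ n) := by ring
      _ ≤ 1 - z ^ n := mul_le_of_le_one_left (sub_nonneg.2 hpow) hz.2.le
      _ ≤ n * (1 - z ^ 2) := one_sub_pow_le_mul_one_sub_sq (Ioo_subset_Icc_self hz) n

lemma integral_pow_div_sqrt_one_sub_sq :
    ∫ z in Ioo (0 : ℝ) 1, z ^ n / √(1 - z ^ 2) =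
      √π / 2 * (Gamma ((n + 1) / 2) / Gamma (n / 2 + 1)) := by
  have hbeta := integral_rpow_mul_one_sub_sq_rpow (a := (n + 1) / 2) (b := 1 / 2)
    (by positivity) (by norm_num)
  rw [Gamma_one_half_eq, show (n + 1) / 2 + 1 / 2 = (n / 2 + 1 : ℝ) by ring] at hbeta
  rw [← setIntegral_congr_fun measurableSet_Ioo fun z hz => ?_, hbeta]
  · ring
  · have hu : 0 ≤ 1 - z ^ 2 := by nlinarith [hz.1, hz.2]
    rw [show 2 * ((n + 1) / 2) - 1 = (n : ℝ) by ring, rpow_natCast,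
      show (1 / 2 - 1 : ℝ) = -(1 / 2) by norm_num, rpow_neg hu, ← sqrt_eq_rpow, div_eq_mul_inv]

lemma integral_one_sub_pow_div_rpow_three_halves :
    ∫ z in Ioo (0 : ℝ) 1, (1 - z ^ n) / (1 - z ^ 2) ^ (3 / 2 : ℝ) =
      n * ∫ z in Ioo (0 : ℝ) 1, z ^ n / √(1 - z ^ 2) := by
  have hh := integrableOn_one_sub_pow_div_rpow_three_halves n
  have hk := (integrableOn_pow_div_sqrt_one_sub_sq n).const_mul n
  have hftc := intervalIntegral.integral_eq_sub_of_hasDerivAt_of_tendsto zero_lt_one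
    (fun z hz => hasDerivAt_sub_pow_div_sqrt_one_sub_sq n (by nlinarith [hz.1, hz.2]))
    ((intervalIntegrable_iff_integrableOn_Ioo_of_le zero_le_one).2 (hh.sub hk))
    (tendsto_sub_pow_div_sqrt_one_sub_sq_nhdsGT_zero n)
    (tendsto_sub_pow_div_sqrt_one_sub_sq_nhdsLT_one n)
  rw [intervalIntegral.integral_of_le zero_le_one, integral_Ioc_eq_integral_Ioo,
    integral_sub hh hk, integral_const_mul] at hftc
  linarith

lemma one_sub_two_mul_pow_add_pow_div_eq {z : ℝ} (hz : z ^ 2 < 1) :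
    (1 - 2 * z ^ n + z ^ (n + 2)) / (1 - z ^ 2) ^ (3 / 2 : ℝ) =
      (1 - z ^ n) / (1 - z ^ 2) ^ (3 / 2 : ℝ) - z ^ n / √(1 - z ^ 2) := by
  have hu : 0 < 1 - z ^ 2 := by linarith
  have hs : 0 < √(1 - z ^ 2) := sqrt_pos.2 hu
  rw [rpow_three_halves_eq_mul_sqrt hu.le]
  field_simp
  ring

end

theorem FFR_bending_angle_correction_integral
    (D : ℕ) (hD : 4 ≤ D) :
    IntegrableOn (fun z : ℝ => (1 - 2 * z ^ (D - 1) + z ^ (D + 1)) / (1 - z ^ 2) ^ ((3 : ℝ) / 2))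
      (Ioo 0 1) volume ∧
    ∫ z in Ioo (0 : ℝ) 1, (1 - 2 * z ^ (D - 1) + z ^ (D + 1)) / (1 - z ^ 2) ^ ((3 : ℝ) / 2) =
      Real.sqrt π * ((D - 2) / 2) * (Real.Gamma (D / 2) / Real.Gamma ((D + 1) / 2)) := by
  obtain ⟨n, rfl⟩ : ∃ n, D = n + 1 := ⟨D - 1, by omega⟩
  have hsplit : EqOn (fun z : ℝ => (1 - 2 * z ^ n + z ^ (n + 2)) / (1 - z ^ 2) ^ (3 / 2 : ℝ))
      (fun z => (1 - z ^ n) / (1 - z ^ 2) ^ (3 / 2 : ℝ) - z ^ n / √(1 - z ^ 2)) (Ioo 0 1) :=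
    fun z hz => one_sub_two_mul_pow_add_pow_div_eq n (by nlinarith [hz.1, hz.2])
  have hh := integrableOn_one_sub_pow_div_rpow_three_halves n
  have hk := integrableOn_pow_div_sqrt_one_sub_sq n
  simp only [Nat.add_sub_cancel, add_assoc, Nat.reduceAdd]
  refine ⟨(hh.sub hk).congr_fun hsplit.symm measurableSet_Ioo, ?_⟩
  rw [setIntegral_congr_fun measurableSet_Ioo hsplit, integral_sub hh hk,
    integral_one_sub_pow_div_rpow_three_halves, integral_pow_div_sqrt_one_sub_sq]
  push_cast
  rw [show ((n : ℝ) + 1 + 1) / 2 = n / 2 + 1 by ring]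
  ring
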